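/- arXiv:0910.3815 — 6 statements merged into one kernel-verified Lean document; each statement's English description precedes it below -/
import Mathlib

section
/- Let G be a finite group with |G| = n and S ⊆ G with |S| = k ≥ 1. Then the covering number τ(S,G) satisfies τ(S,G) ≤ (n/k)·H_k, where H_k = ∑_{j=1}^k 1/j is the k-th harmonic number. In particular τ(S,G) ≤ (n/k)(log k + 1). -/
open Pointwise

/-- The covering number `τ(S,G)`: the minimal size of a set `T ⊆ G` with `T·S = G`. -/
noncomputable def covNum (G : Type*) [Group G] [Fintype G] [DecidableEq G]
    (S : Finset G) : ℕ :=
  sInf {m | ∃ T : Finset G, T.card = m ∧ T * S = Finset.univ}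

/-! Greedy covering with a harmonic potential (Lovász, Stein). For the set `U` of points not yet
covered put `Φ(U) = ∑_{t ∈ G} H_{|tS ∩ U|}`. Add a translate `t₀S` meeting `U` in the maximal
number `c` of points, and let `W = t₀S ∩ U`. Every `tS ∩ U` has at most `c` points and loses
`|tS ∩ W|` of them, so its harmonic term drops by at least `|tS ∩ W| / c`; as every point lies in
exactly `|S|` translates, `Φ` drops by at least `|S|`. Hence greedy covers `G` with at most
`Φ(G) / |S| = |G| H_{|S|} / |S|` translates. -/

open Finset

theorem div_le_harmonic_sub_harmonic {a b c : ℕ} (hba : b ≤ a) (hac : a ≤ c) :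
    ((a : ℚ) - b) / c ≤ harmonic a - harmonic b := by
  rw [harmonic, harmonic, ← sum_Ico_eq_sub _ hba]
  calc ((a : ℚ) - b) / c = ∑ _i ∈ Ico b a, (1 / c : ℚ) := by
        rw [sum_const, Nat.card_Ico, nsmul_eq_mul, Nat.cast_sub hba]; ring
    _ ≤ ∑ i ∈ Ico b a, ((i + 1 : ℕ) : ℚ)⁻¹ := by
        refine sum_le_sum fun i hi => ?_
        rw [one_div]
        exact inv_anti₀ (by positivity) (by have := (mem_Ico.mp hi).2; exact_mod_cast (by omega))

namespace Finset

variable {G : Type*} [Group G] [Fintype G] [DecidableEq G]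

theorem sum_card_smul_inter (S V : Finset G) : ∑ t : G, #(t • S ∩ V) = #V * #S := by
  have hbelow (v : G) : (univ.filter fun t : G => v ∈ t • S) = v • S⁻¹ := by
    ext t
    simp only [mem_filter, mem_univ, true_and, ← inv_smul_mem_iff, mem_inv', smul_eq_mul,
      mul_inv_rev, inv_inv]
  calc ∑ t : G, #(t • S ∩ V) = ∑ t : G, #(V.bipartiteAbove (fun t v => v ∈ t • S) t) := by
        simp only [bipartiteAbove, filter_mem_eq_inter, inter_comm]
    _ = ∑ v ∈ V, #(univ.bipartiteBelow (fun t v => v ∈ t • S) v) :=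
        sum_card_bipartiteAbove_eq_sum_card_bipartiteBelow _
    _ = #V * #S := by
        simp only [bipartiteBelow, hbelow, card_smul_finset, card_inv, sum_const, smul_eq_mul]

theorem exists_cover_card_mul_le_sum_harmonic {S : Finset G} (hS : S.Nonempty) (U : Finset G) :
    ∃ T : Finset G, U ⊆ T * S ∧ (#T * #S : ℚ) ≤ ∑ t : G, harmonic #(t • S ∩ U) := by
  induction U using Finset.strongInduction with | H U ih =>
  rcases U.eq_empty_or_nonempty with rfl | ⟨u, hu⟩
  · exact ⟨∅, by simp, by simp⟩
  obtain ⟨t₀, -, ht₀⟩ := exists_max_image (univ : Finset G) (fun t => #(t • S ∩ U)) univ_nonempty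
  set W := t₀ • S ∩ U
  have hW : W.Nonempty := by
    obtain ⟨s, hs⟩ := hS
    refine card_pos.mp (lt_of_lt_of_le (card_pos.mpr ⟨u, mem_inter.mpr ⟨?_, hu⟩⟩)
      (ht₀ (u * s⁻¹) (mem_univ _)))
    exact mem_smul_finset.mpr ⟨s, hs, by simp⟩
  obtain ⟨T, hcov, hcard⟩ := ih (U \ W) (sdiff_ssubset inter_subset_right hW)
  have hsplit (t : G) : #(t • S ∩ (U \ W)) + #(t • S ∩ W) = #(t • S ∩ U) := by
    have hdisj : Disjoint (t • S ∩ (U \ W)) (t • S ∩ W) :=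
      disjoint_sdiff_self_left.mono inter_subset_right inter_subset_right
    rw [← card_union_of_disjoint hdisj, ← inter_union_distrib_left,
      sdiff_union_of_subset inter_subset_right]
  have hgain : (#S : ℚ) ≤ ∑ t : G, (harmonic #(t • S ∩ U) - harmonic #(t • S ∩ (U \ W))) :=
    calc (#S : ℚ) = ∑ t : G, (#(t • S ∩ W) : ℚ) / #W := by
          rw [← sum_div, ← Nat.cast_sum, sum_card_smul_inter, Nat.cast_mul]
          field_simp [card_pos.mpr hW]
      _ ≤ _ := sum_le_sum fun t _ => by
          have := div_le_harmonic_sub_harmonic (Nat.le.intro (hsplit t)) (ht₀ t (mem_univ _))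
          rw [← hsplit t] at this ⊢
          rwa [Nat.cast_add, add_sub_cancel_left] at this
  refine ⟨insert t₀ T, fun x hx => ?_, ?_⟩
  · by_cases hxW : x ∈ W
    · obtain ⟨s, hs, rfl⟩ := mem_smul_finset.mp (mem_inter.mp hxW).1
      exact mem_mul.mpr ⟨t₀, mem_insert_self _ _, s, hs, rfl⟩
    · exact mul_subset_mul_right (subset_insert _ _) (hcov (mem_sdiff.mpr ⟨hx, hxW⟩))
  calc (#(insert t₀ T) * #S : ℚ) ≤ (#T + 1) * #S := by
        gcongr; exact_mod_cast card_insert_le _ _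
    _ = #T * #S + #S := by ring
    _ ≤ ∑ t : G, harmonic #(t • S ∩ (U \ W))
        + ∑ t : G, (harmonic #(t • S ∩ U) - harmonic #(t • S ∩ (U \ W))) := add_le_add hcard hgain
    _ = ∑ t : G, harmonic #(t • S ∩ U) := by rw [← sum_add_distrib]; simp

end Finset

theorem covNum_mul_card_le {G : Type*} [Group G] [Fintype G] [DecidableEq G] {S : Finset G}
    (hS : S.Nonempty) : (covNum G S * #S : ℚ) ≤ Fintype.card G * harmonic #S := by
  obtain ⟨T, hcov, hcard⟩ := exists_cover_card_mul_le_sum_harmonic hS univ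
  have hT : covNum G S ≤ #T := Nat.sInf_le ⟨T, rfl, univ_subset_iff.mp hcov⟩
  calc (covNum G S * #S : ℚ) ≤ #T * #S := by gcongr
    _ ≤ ∑ t : G, harmonic #(t • S ∩ univ) := hcard
    _ = Fintype.card G * harmonic #S := by simp [card_smul_finset]

theorem covering_number_harmonic_bound {G : Type*} [Group G] [Fintype G] [DecidableEq G]
    (S : Finset G) (n k : ℕ) (hn : Fintype.card G = n) (hk : S.card = k) (hk1 : 1 ≤ k) :
    (covNum G S : ℝ) ≤ ((n : ℝ) / k) * ∑ j ∈ Finset.range k, (1 : ℝ) / (j + 1) ∧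
    (covNum G S : ℝ) ≤ ((n : ℝ) / k) * (Real.log k + 1) := by
  subst hn hk
  have hk0 : (0 : ℝ) < #S := by exact_mod_cast hk1
  have hH : ∑ j ∈ range #S, (1 : ℝ) / (j + 1) = harmonic #S := by
    simp [harmonic, one_div]
  have hbound : (covNum G S : ℝ) ≤ (Fintype.card G / #S) * harmonic #S := by
    rw [div_mul_eq_mul_div, le_div_iff₀ hk0]
    exact_mod_cast covNum_mul_card_le (card_pos.mp hk1)
  rw [hH]
  refine ⟨hbound, hbound.trans ?_⟩
  gcongr
  linarith [harmonic_le_one_add_log #S]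
end

section
/- For finite groups G_1, G_2 and non-empty subsets S_1 ⊆ G_1, S_2 ⊆ G_2, the covering densities satisfy κ(S_1 × S_2, G_1 × G_2) ≥ max{κ(S_1,G_1), κ(S_2,G_2)}, where κ(S,G) = τ(S,G)·|S|/|G|. -/
open Pointwise

/-- The covering density `κ(S,G) = τ(S,G)·|S|/|G|`. -/
noncomputable def covDensity (G : Type*) [Group G] [Fintype G] [DecidableEq G]
    (S : Finset G) : ℝ :=
  (covNum G S : ℝ) * S.card / Fintype.card G

private lemma univ_mul_nonempty {G : Type*} [Group G] [Fintype G] [DecidableEq G]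
    {S : Finset G} (hS : S.Nonempty) : (Finset.univ : Finset G) * S = Finset.univ := by
  apply Finset.eq_univ_of_forall
  intro x
  obtain ⟨s, hs⟩ := hS
  have : (x * s⁻¹) * s = x := by group
  exact this ▸ Finset.mul_mem_mul (Finset.mem_univ _) hs

private lemma covNum_exists {G : Type*} [Group G] [Fintype G] [DecidableEq G]
    {S : Finset G} (hS : S.Nonempty) :
    ∃ T : Finset G, T.card = covNum G S ∧ T * S = Finset.univ := by
  have hne : {m | ∃ T : Finset G, T.card = m ∧ T * S = Finset.univ}.Nonempty :=
    ⟨_, Finset.univ, rfl, univ_mul_nonempty hS⟩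
  exact Nat.sInf_mem hne

private lemma covNum_le {G : Type*} [Group G] [Fintype G] [DecidableEq G]
    {S T : Finset G} (hT : T * S = Finset.univ) : covNum G S ≤ T.card :=
  Nat.sInf_le ⟨T, rfl, hT⟩

private lemma key₁ {G₁ G₂ : Type*}
    [Group G₁] [Fintype G₁] [DecidableEq G₁] [Group G₂] [Fintype G₂] [DecidableEq G₂]
    (S₁ : Finset G₁) (S₂ : Finset G₂) (T : Finset (G₁ × G₂))
    (hT : T * (S₁ ×ˢ S₂) = Finset.univ) :
    covNum G₁ S₁ * Fintype.card G₂ ≤ T.card * S₂.card := by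
  have hstep : ∀ y : G₂,
      covNum G₁ S₁ ≤ (T.filter fun t => y ∈ ({t.2} : Finset G₂) * S₂).card := by
    intro y
    have hcov : ((T.filter fun t => y ∈ ({t.2} : Finset G₂) * S₂).image Prod.fst) * S₁
        = Finset.univ := by
      apply Finset.eq_univ_of_forall
      intro x
      have hx : (x, y) ∈ T * (S₁ ×ˢ S₂) := hT ▸ Finset.mem_univ _
      rw [Finset.mem_mul] at hx
      obtain ⟨t, ht, s, hs, hts⟩ := hx
      rw [Finset.mem_product] at hs
      have h1 : t.1 * s.1 = x := congrArg Prod.fst hts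
      have h2 : t.2 * s.2 = y := congrArg Prod.snd hts
      have hty : y ∈ ({t.2} : Finset G₂) * S₂ :=
        h2 ▸ Finset.mul_mem_mul (Finset.mem_singleton_self _) hs.2
      exact h1 ▸ Finset.mul_mem_mul
        (Finset.mem_image_of_mem _ (Finset.mem_filter.2 ⟨ht, hty⟩)) hs.1
    calc covNum G₁ S₁ ≤ _ := covNum_le hcov
      _ ≤ _ := Finset.card_image_le
  calc covNum G₁ S₁ * Fintype.card G₂
      = ∑ _y : G₂, covNum G₁ S₁ := by
        rw [Finset.sum_const, Finset.card_univ, smul_eq_mul, mul_comm]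
    _ ≤ ∑ y : G₂, (T.filter fun t => y ∈ ({t.2} : Finset G₂) * S₂).card :=
        Finset.sum_le_sum fun y _ => hstep y
    _ = ∑ y : G₂, ∑ t ∈ T, if y ∈ ({t.2} : Finset G₂) * S₂ then 1 else 0 := by
        exact Finset.sum_congr rfl fun _ _ => Finset.card_filter _ _
    _ = ∑ t ∈ T, ∑ y : G₂, if y ∈ ({t.2} : Finset G₂) * S₂ then 1 else 0 :=
        Finset.sum_comm
    _ = ∑ t ∈ T, (({t.2} : Finset G₂) * S₂).card := by
        congr 1; ext t
        rw [← Finset.card_filter]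
        congr 1
        exact Finset.filter_univ_mem _
    _ = ∑ _t ∈ T, S₂.card := by
        apply Finset.sum_congr rfl
        intro t _
        rw [Finset.singleton_mul]
        exact Finset.card_image_of_injective _ (mul_right_injective _)
    _ = T.card * S₂.card := by rw [Finset.sum_const, smul_eq_mul]

private lemma key₂ {G₁ G₂ : Type*}
    [Group G₁] [Fintype G₁] [DecidableEq G₁] [Group G₂] [Fintype G₂] [DecidableEq G₂]
    (S₁ : Finset G₁) (S₂ : Finset G₂) (T : Finset (G₁ × G₂))
    (hT : T * (S₁ ×ˢ S₂) = Finset.univ) :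
    covNum G₂ S₂ * Fintype.card G₁ ≤ T.card * S₁.card := by
  have hstep : ∀ x : G₁,
      covNum G₂ S₂ ≤ (T.filter fun t => x ∈ ({t.1} : Finset G₁) * S₁).card := by
    intro x
    have hcov : ((T.filter fun t => x ∈ ({t.1} : Finset G₁) * S₁).image Prod.snd) * S₂
        = Finset.univ := by
      apply Finset.eq_univ_of_forall
      intro y
      have hx : (x, y) ∈ T * (S₁ ×ˢ S₂) := hT ▸ Finset.mem_univ _
      rw [Finset.mem_mul] at hx
      obtain ⟨t, ht, s, hs, hts⟩ := hx
      rw [Finset.mem_product] at hs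
      have h1 : t.1 * s.1 = x := congrArg Prod.fst hts
      have h2 : t.2 * s.2 = y := congrArg Prod.snd hts
      have htx : x ∈ ({t.1} : Finset G₁) * S₁ :=
        h1 ▸ Finset.mul_mem_mul (Finset.mem_singleton_self _) hs.1
      exact h2 ▸ Finset.mul_mem_mul
        (Finset.mem_image_of_mem _ (Finset.mem_filter.2 ⟨ht, htx⟩)) hs.2
    calc covNum G₂ S₂ ≤ _ := covNum_le hcov
      _ ≤ _ := Finset.card_image_le
  calc covNum G₂ S₂ * Fintype.card G₁
      = ∑ _x : G₁, covNum G₂ S₂ := by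
        rw [Finset.sum_const, Finset.card_univ, smul_eq_mul, mul_comm]
    _ ≤ ∑ x : G₁, (T.filter fun t => x ∈ ({t.1} : Finset G₁) * S₁).card :=
        Finset.sum_le_sum fun x _ => hstep x
    _ = ∑ x : G₁, ∑ t ∈ T, if x ∈ ({t.1} : Finset G₁) * S₁ then 1 else 0 := by
        exact Finset.sum_congr rfl fun _ _ => Finset.card_filter _ _
    _ = ∑ t ∈ T, ∑ x : G₁, if x ∈ ({t.1} : Finset G₁) * S₁ then 1 else 0 :=
        Finset.sum_comm
    _ = ∑ t ∈ T, (({t.1} : Finset G₁) * S₁).card := by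
        congr 1; ext t
        rw [← Finset.card_filter]
        congr 1
        exact Finset.filter_univ_mem _
    _ = ∑ _t ∈ T, S₁.card := by
        apply Finset.sum_congr rfl
        intro t _
        rw [Finset.singleton_mul]
        exact Finset.card_image_of_injective _ (mul_right_injective _)
    _ = T.card * S₁.card := by rw [Finset.sum_const, smul_eq_mul]

theorem covering_density_product_lower {G₁ G₂ : Type*}
    [Group G₁] [Fintype G₁] [DecidableEq G₁] [Group G₂] [Fintype G₂] [DecidableEq G₂]
    (S₁ : Finset G₁) (S₂ : Finset G₂) (h₁ : S₁.Nonempty) (h₂ : S₂.Nonempty) :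
    max (covDensity G₁ S₁) (covDensity G₂ S₂) ≤ covDensity (G₁ × G₂) (S₁ ×ˢ S₂) := by
  obtain ⟨T, hTcard, hTcov⟩ := covNum_exists (G := G₁ × G₂) (h₁.product h₂)
  have k1 := key₁ S₁ S₂ T hTcov
  have k2 := key₂ S₁ S₂ T hTcov
  rw [hTcard] at k1 k2
  have hG₁ : (0 : ℝ) < Fintype.card G₁ := by exact_mod_cast Fintype.card_pos
  have hG₂ : (0 : ℝ) < Fintype.card G₂ := by exact_mod_cast Fintype.card_pos
  have hcardprod : ((S₁ ×ˢ S₂).card : ℝ) = S₁.card * S₂.card := by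
    rw [Finset.card_product]; push_cast; ring
  have hGprod : (Fintype.card (G₁ × G₂) : ℝ) = Fintype.card G₁ * Fintype.card G₂ := by
    rw [Fintype.card_prod]; push_cast; ring
  have hS₁ : (0 : ℝ) ≤ S₁.card := Nat.cast_nonneg _
  have hS₂ : (0 : ℝ) ≤ S₂.card := Nat.cast_nonneg _
  have k1' : (covNum G₁ S₁ : ℝ) * Fintype.card G₂ ≤ covNum (G₁ × G₂) (S₁ ×ˢ S₂) * S₂.card := by
    exact_mod_cast k1
  have k2' : (covNum G₂ S₂ : ℝ) * Fintype.card G₁ ≤ covNum (G₁ × G₂) (S₁ ×ˢ S₂) * S₁.card := by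
    exact_mod_cast k2
  apply max_le
  · unfold covDensity
    rw [hcardprod, hGprod, div_le_div_iff₀ hG₁ (by positivity)]
    nlinarith [mul_le_mul_of_nonneg_right k1' hS₁, hG₁.le, hG₂.le]
  · unfold covDensity
    rw [hcardprod, hGprod, div_le_div_iff₀ hG₂ (by positivity)]
    nlinarith [mul_le_mul_of_nonneg_right k2' hS₂, hG₁.le, hG₂.le]
end

section
/- Let S ⊂ ℤ be finite with diameter d and let n > d. Regard S as a subset of ℤ_n. Then for every m ≥ 1, τ(S, mn − d) ≤ m·τ(S, ℤ_n), where τ(S,x) is the minimal number of translates of S ⊂ ℤ covering an interval of x integers and τ(S, ℤ_n) the minimal number of translates covering ℤ_n. -/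
open Pointwise

/-- The covering number in a finite additive group: minimal size of `T` with `T + S = G`. -/
noncomputable def covNumAdd (G : Type*) [AddGroup G] [Fintype G] [DecidableEq G]
    (S : Finset G) : ℕ :=
  sInf {m | ∃ T : Finset G, T.card = m ∧ T + S = Finset.univ}

/-- `τ(S,x)`: the minimal number of integer translates of `S` covering `{1,...,x}`. -/
noncomputable def tauZ (S : Finset ℤ) (n : ℕ) : ℕ :=
  sInf {m | ∃ T : Finset ℤ, T.card = m ∧ Finset.Icc (1 : ℤ) n ⊆ T + S}

/-!
Take `T ⊆ ℤ_n` of minimal size with `T + S = ℤ_n`, and lift each element of `T` to its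
representative in the window `[1 - max S, n - max S]`. Every `x ∈ [1, mn - d]` is then
`t + s + jn` with `t` a lift, `s ∈ S`, and the window makes `x - t - s` lie strictly between
`-n` and `mn`, so `0 ≤ j < m`. Hence the `m` shifts of the lifts by `0, n, …, (m - 1)n` give
an integer set of size at most `m |T|` whose sum with `S` covers `[1, mn - d]`.
-/

open Finset

theorem exists_card_eq_covNumAdd {G : Type*} [AddGroup G] [Fintype G] [DecidableEq G]
    {S : Finset G} (hS : S.Nonempty) :
    ∃ T : Finset G, T.card = covNumAdd G S ∧ T + S = univ := by
  obtain ⟨s, hs⟩ := hS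
  have huniv : (univ : Finset G) + S = univ :=
    eq_univ_iff_forall.mpr fun g => mem_add.mpr ⟨g - s, mem_univ _, s, hs, sub_add_cancel g s⟩
  obtain ⟨T, hT, hTS⟩ :=
    Nat.sInf_mem (s := {m | ∃ T : Finset G, T.card = m ∧ T + S = univ}) ⟨_, univ, rfl, huniv⟩
  exact ⟨T, hT, hTS⟩

theorem tauZ_le_card {S T : Finset ℤ} {x : ℕ} (h : Icc 1 (x : ℤ) ⊆ T + S) :
    tauZ S x ≤ T.card :=
  Nat.sInf_le ⟨T, rfl, h⟩

theorem ZMod.exists_mem_Ico_intCast_eq {n : ℕ} [NeZero n] (c : ℤ) (z : ZMod n) :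
    ∃ t ∈ Ico c (c + n), (t : ZMod n) = z := by
  refine ⟨((z - (c : ZMod n)).val : ℤ) + c, mem_Ico.mpr ⟨?_, ?_⟩, by simp⟩
  · have := Int.natCast_nonneg (z - (c : ZMod n)).val
    omega
  · have := ZMod.val_lt (z - (c : ZMod n))
    omega

theorem Int.exists_lt_eq_mul_of_dvd {n m : ℕ} {k : ℤ} (hdvd : (n : ℤ) ∣ k)
    (hlo : -(n : ℤ) < k) (hhi : k < m * n) : ∃ j < m, k = j * n := by
  obtain ⟨j, rfl⟩ := hdvd
  have hj : 0 ≤ j := by nlinarith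
  refine ⟨j.toNat, ?_, by rw [Int.toNat_of_nonneg hj, mul_comm]⟩
  have : j < m := by nlinarith
  omega

theorem Icc_subset_add_multiples_add {S T : Finset ℤ} {a b : ℤ} {n : ℕ} (m : ℕ)
    (hS : ∀ s ∈ S, a ≤ s ∧ s ≤ b) (hT : T ⊆ Ico (1 - b) (1 - b + n))
    (hcov : ∀ x : ℤ, ∃ t ∈ T, ∃ s ∈ S, (x : ZMod n) = t + s) :
    Icc 1 (m * n - (b - a)) ⊆ T + (range m).image (fun j : ℕ => (j : ℤ) * n) + S := by
  intro x hx
  obtain ⟨hx1, hx2⟩ := mem_Icc.mp hx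
  obtain ⟨t, ht, s, hs, hxts⟩ := hcov x
  obtain ⟨ht1, ht2⟩ := mem_Ico.mp (hT ht)
  obtain ⟨hs1, hs2⟩ := hS s hs
  have hdvd : (n : ℤ) ∣ x - (t + s) :=
    (ZMod.intCast_eq_intCast_iff_dvd_sub _ _ _).mp (by push_cast; exact hxts.symm)
  obtain ⟨j, hj, hxj⟩ := Int.exists_lt_eq_mul_of_dvd (m := m) hdvd (by omega) (by omega)
  refine mem_add.mpr ⟨t + j * n, add_mem_add ht (mem_image_of_mem _ (mem_range.mpr hj)),
    s, hs, by linarith⟩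

theorem tauZ_interval_le_mul_cyclic (S : Finset ℤ) (hS : S.Nonempty) (d n : ℕ)
    (hd : S.max' hS - S.min' hS = (d : ℤ)) (hn : d < n) [NeZero n] :
    ∀ m : ℕ, 1 ≤ m →
      tauZ S (m * n - d) ≤ m * covNumAdd (ZMod n) (S.image (fun x : ℤ => (x : ZMod n))) := by
  intro m hm
  obtain ⟨T, hcard, hcovT⟩ := exists_card_eq_covNumAdd (hS.image (fun x : ℤ => (x : ZMod n)))
  choose lift hlift_mem hlift_cast using ZMod.exists_mem_Ico_intCast_eq (n := n) (1 - S.max' hS)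
  have hcov : ∀ x : ℤ, ∃ t ∈ T.image lift, ∃ s ∈ S, (x : ZMod n) = t + s := by
    intro x
    obtain ⟨z, hz, w, hw, hzw⟩ := mem_add.mp (hcovT ▸ mem_univ (x : ZMod n))
    obtain ⟨s, hs, rfl⟩ := mem_image.mp hw
    exact ⟨lift z, mem_image_of_mem _ hz, s, hs, by rw [hlift_cast, hzw]⟩
  have hdn : d ≤ m * n := hn.le.trans (Nat.le_mul_of_pos_left n hm)
  have hIcc := Icc_subset_add_multiples_add (a := S.min' hS) (b := S.max' hS) m
    (fun s hs => ⟨S.min'_le s hs, S.le_max' s hs⟩)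
    (image_subset_iff.mpr fun z _ => hlift_mem z) hcov
  rw [hd, ← Nat.cast_mul, ← Nat.cast_sub hdn] at hIcc
  calc tauZ S (m * n - d)
      ≤ (T.image lift + (range m).image (fun j : ℕ => (j : ℤ) * n)).card := tauZ_le_card hIcc
    _ ≤ T.card * m := card_add_le.trans <| Nat.mul_le_mul card_image_le <|
        card_image_le.trans (card_range m).le
    _ = m * covNumAdd (ZMod n) (S.image (fun x : ℤ => (x : ZMod n))) := by rw [hcard, mul_comm]
end

section
/- Let S ⊂ ℤ be finite with diameter d. Then for any n > d, κ(S, ℤ_n) ≤ ((n+d)/n)·κ(S, ℤ) < 2κ(S, ℤ), where κ(S,ℤ_n) = τ(S,ℤ_n)|S|/n and κ(S,ℤ) = τ(S)|S| with τ(S) the covering density of S in ℤ. -/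
open Pointwise

/-- The covering density `τ(S)` of a finite set `S ⊂ ℤ`, as the infimum of `τ(S,n)/n`. -/
noncomputable def covDens (S : Finset ℤ) : ℝ :=
  ⨅ n : ℕ+, (tauZ S n : ℝ) / n

lemma tau_spec (S : Finset ℤ) (hS : S.Nonempty) (m : ℕ) :
    ∃ T : Finset ℤ, T.card = tauZ S m ∧ Finset.Icc (1 : ℤ) m ⊆ T + S := by
  have hne : {k | ∃ T : Finset ℤ, T.card = k ∧ Finset.Icc (1 : ℤ) m ⊆ T + S}.Nonempty := by
    refine ⟨((Finset.Icc (1:ℤ) m).image (fun i => i - S.min' hS)).card,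
      (Finset.Icc (1:ℤ) m).image (fun i => i - S.min' hS), rfl, ?_⟩
    intro x hx
    exact Finset.mem_add.mpr ⟨x - S.min' hS, Finset.mem_image_of_mem _ hx,
      S.min' hS, S.min'_mem hS, sub_add_cancel x _⟩
  exact (Nat.sInf_mem hne).imp fun T ⟨h1, h2⟩ => ⟨h1, h2⟩

lemma covNum_le_of_interval (S : Finset ℤ) (n : ℕ) [NeZero n] (a : ℤ) (T : Finset ℤ)
    (h : Finset.Icc (a + 1) (a + n) ⊆ T + S) :
    covNumAdd (ZMod n) (S.image (fun x : ℤ => (x : ZMod n))) ≤ T.card := by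
  have hn0 : 0 < (n : ℤ) := by exact_mod_cast Nat.pos_of_ne_zero (NeZero.ne n)
  have hcover : (T.image (fun x : ℤ => (x : ZMod n))) +
      (S.image (fun x : ℤ => (x : ZMod n))) = Finset.univ := by
    apply Finset.eq_univ_iff_forall.mpr
    intro z
    obtain ⟨v, hv⟩ := ZMod.intCast_surjective z
    set y := a + 1 + (v - (a + 1)) % n with hy
    have h1 : 0 ≤ (v - (a + 1)) % n := Int.emod_nonneg _ hn0.ne'
    have h2 : (v - (a + 1)) % n < n := Int.emod_lt_of_pos _ hn0
    have hyI : y ∈ Finset.Icc (a + 1) (a + n) := by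
      rw [Finset.mem_Icc]; omega
    obtain ⟨t, ht, s, hs, hts⟩ := Finset.mem_add.mp (h hyI)
    have hyz : ((y : ℤ) : ZMod n) = z := by
      have hdvd : (n : ℤ) ∣ v - y := by
        refine ⟨(v - (a + 1)) / n, ?_⟩
        have := Int.emod_def (v - (a + 1)) (n : ℤ)
        rw [hy]; linarith
      rw [← hv]
      exact (ZMod.intCast_eq_intCast_iff _ _ _).mpr (Int.modEq_iff_dvd.mpr hdvd)
    refine Finset.mem_add.mpr ⟨(t : ZMod n), Finset.mem_image_of_mem _ ht,
      (s : ZMod n), Finset.mem_image_of_mem _ hs, ?_⟩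
    rw [← Int.cast_add, hts, hyz]
  calc covNumAdd (ZMod n) (S.image (fun x : ℤ => (x : ZMod n)))
      ≤ (T.image (fun x : ℤ => (x : ZMod n))).card :=
        Nat.sInf_le ⟨_, rfl, hcover⟩
    _ ≤ T.card := Finset.card_image_le

lemma concat (S : Finset ℤ) (m k : ℕ) (T : Finset ℤ)
    (hT : Finset.Icc (1 : ℤ) m ⊆ T + S) :
    ∃ T' : Finset ℤ, T'.card ≤ k * T.card ∧
      Finset.Icc (1 : ℤ) (k * m : ℕ) ⊆ T' + S := by
  refine ⟨(Finset.range k).biUnion (fun j => T.image (· + ((j * m : ℕ) : ℤ))), ?_, ?_⟩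
  · calc ((Finset.range k).biUnion (fun j => T.image (· + ((j * m : ℕ) : ℤ)))).card
        ≤ ∑ j ∈ Finset.range k, (T.image (· + ((j * m : ℕ) : ℤ))).card :=
          Finset.card_biUnion_le
      _ ≤ ∑ _j ∈ Finset.range k, T.card :=
          Finset.sum_le_sum fun j _ => Finset.card_image_le
      _ = k * T.card := by rw [Finset.sum_const, Finset.card_range, smul_eq_mul]
  · intro x hx
    rw [Finset.mem_Icc] at hx
    rcases Nat.eq_zero_or_pos m with hm | hm
    · exfalso; rw [hm] at hx; push_cast at hx; omega
    have hmz : 0 < (m : ℤ) := by exact_mod_cast hm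
    set j : ℤ := (x - 1) / m with hj
    have hj0 : 0 ≤ j := Int.ediv_nonneg (by omega) hmz.le
    have hkm : (((k * m : ℕ)) : ℤ) = (k : ℤ) * m := by push_cast; ring
    have hjk : j < k := by
      rw [hj, Int.ediv_lt_iff_lt_mul hmz]; omega
    have hmod := Int.emod_nonneg (x - 1) hmz.ne'
    have hmod2 := Int.emod_lt_of_pos (x - 1) hmz
    have hdef := Int.mul_ediv_add_emod (x - 1) (m : ℤ)
    have hcomm : (m : ℤ) * ((x - 1) / m) = ((x - 1) / m) * m := mul_comm _ _
    have hxj : x - j * m ∈ Finset.Icc (1 : ℤ) m := by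
      rw [Finset.mem_Icc, hj]; omega
    obtain ⟨t, ht, s, hs, hts⟩ := Finset.mem_add.mp (hT hxj)
    refine Finset.mem_add.mpr ⟨t + (j.toNat * m : ℕ), ?_, s, hs, ?_⟩
    · exact Finset.mem_biUnion.mpr ⟨j.toNat, Finset.mem_range.mpr (by omega),
        Finset.mem_image_of_mem _ ht⟩
    · have : ((j.toNat * m : ℕ) : ℤ) = j * m := by push_cast; rw [Int.toNat_of_nonneg hj0]
      rw [this]; omega

lemma windows (S : Finset ℤ) (hS : S.Nonempty) (d n : ℕ) [NeZero n]
    (hd : S.max' hS - S.min' hS = (d : ℤ)) (M : ℕ) (T : Finset ℤ)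
    (hT : Finset.Icc (1 : ℤ) M ⊆ T + S) :
    (M / (n + d)) * covNumAdd (ZMod n) (S.image (fun x : ℤ => (x : ZMod n))) ≤ T.card := by
  classical
  have hn0 : 0 < n := Nat.pos_of_ne_zero (NeZero.ne n)
  have hnd : 0 < n + d := by omega
  set c := covNumAdd (ZMod n) (S.image (fun x : ℤ => (x : ZMod n))) with hc
  set K := M / (n + d) with hK
  have hdiam : ∀ s ∈ S, ∀ s' ∈ S, s' - s ≤ (d : ℤ) := by
    intro s hs s' hs'
    have h1 := S.le_max' s' hs'
    have h2 := S.min'_le s hs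
    omega
  set f : ℕ → Finset ℤ := fun j =>
    T.filter (fun t => ∃ s ∈ S, ((j * (n + d) : ℕ) : ℤ) < t + s ∧
      t + s ≤ ((j * (n + d) : ℕ) : ℤ) + n) with hf
  have hKM : K * (n + d) ≤ M := Nat.div_mul_le_self M (n + d)
  have hcov : ∀ j < K, c ≤ (f j).card := by
    intro j hj
    apply covNum_le_of_interval S n ((j * (n + d) : ℕ) : ℤ)
    intro x hx
    rw [Finset.mem_Icc] at hx
    have hx' : x ∈ Finset.Icc (1 : ℤ) M := by
      rw [Finset.mem_Icc]
      have hjM : (j + 1) * (n + d) ≤ M := le_trans (Nat.mul_le_mul_right _ hj) hKM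
      have h1 : ((j * (n + d) : ℕ) : ℤ) + n ≤ M := by
        have : j * (n + d) + n ≤ M := by nlinarith
        exact_mod_cast this
      have h2 : (0 : ℤ) ≤ ((j * (n + d) : ℕ) : ℤ) := by positivity
      omega
    obtain ⟨t, ht, s, hs, hts⟩ := Finset.mem_add.mp (hT hx')
    refine Finset.mem_add.mpr ⟨t, Finset.mem_filter.mpr ⟨ht, s, hs, by omega⟩, s, hs, hts⟩
  have hdisj : ∀ j ∈ Finset.range K, ∀ j' ∈ Finset.range K, j ≠ j' →
      Disjoint (f j) (f j') := by
    intro j _ j' _ hjj'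
    rw [Finset.disjoint_left]
    intro t htj htj'
    obtain ⟨_, s, hs, hs1, hs2⟩ := Finset.mem_filter.mp htj
    obtain ⟨_, s', hs', hs'1, hs'2⟩ := Finset.mem_filter.mp htj'
    have hd1 := hdiam s hs s' hs'
    have hd2 := hdiam s' hs' s hs
    rcases Nat.lt_or_ge j j' with h | h
    · have : j * (n + d) + (n + d) ≤ j' * (n + d) := by nlinarith
      have : ((j * (n + d) : ℕ) : ℤ) + (n + d) ≤ ((j' * (n + d) : ℕ) : ℤ) := by
        exact_mod_cast this
      omega
    · have hlt : j' < j := by omega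
      have : j' * (n + d) + (n + d) ≤ j * (n + d) := by nlinarith
      have : ((j' * (n + d) : ℕ) : ℤ) + (n + d) ≤ ((j * (n + d) : ℕ) : ℤ) := by
        exact_mod_cast this
      omega
  calc K * c = ∑ _j ∈ Finset.range K, c := by
        rw [Finset.sum_const, Finset.card_range, smul_eq_mul]
    _ ≤ ∑ j ∈ Finset.range K, (f j).card :=
        Finset.sum_le_sum fun j hj => hcov j (Finset.mem_range.mp hj)
    _ = ((Finset.range K).biUnion f).card := (Finset.card_biUnion hdisj).symm
    _ ≤ T.card := Finset.card_le_card (by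
        intro t ht
        obtain ⟨j, _, htj⟩ := Finset.mem_biUnion.mp ht
        exact (Finset.mem_filter.mp htj).1)

lemma key_nat (S : Finset ℤ) (hS : S.Nonempty) (d n : ℕ) [NeZero n]
    (hd : S.max' hS - S.min' hS = (d : ℤ)) (m : ℕ) :
    m * covNumAdd (ZMod n) (S.image (fun x : ℤ => (x : ZMod n))) ≤ (n + d) * tauZ S m := by
  have hn0 : 0 < n := Nat.pos_of_ne_zero (NeZero.ne n)
  have hnd : 0 < n + d := by omega
  set c := covNumAdd (ZMod n) (S.image (fun x : ℤ => (x : ZMod n))) with hc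
  set τ := tauZ S m with hτ
  obtain ⟨T, hTcard, hTcov⟩ := tau_spec S hS m
  have hstep : ∀ k : ℕ, (k * m / (n + d)) * c ≤ k * τ := by
    intro k
    obtain ⟨T', hT'c, hT'cov⟩ := concat S m k T hTcov
    calc (k * m / (n + d)) * c ≤ T'.card := windows S hS d n hd (k * m) T' hT'cov
      _ ≤ k * T.card := hT'c
      _ = k * τ := by rw [hTcard]
  by_contra hlt
  push_neg at hlt
  set k := (n + d) * c + 1 with hk
  have hkstep := hstep k
  have hdm := Nat.div_add_mod (k * m) (n + d)
  have hmod : (k * m) % (n + d) < n + d := Nat.mod_lt _ hnd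
  have h1 : k * m * c ≤ (n + d) * (k * τ) + (n + d) * c := by
    have e : k * m * c = (n + d) * ((k * m / (n + d)) * c) + ((k * m) % (n + d)) * c := by
      conv_lhs => rw [← hdm]
      ring
    calc k * m * c = (n + d) * ((k * m / (n + d)) * c) + ((k * m) % (n + d)) * c := e
      _ ≤ (n + d) * (k * τ) + (n + d) * c :=
          Nat.add_le_add (Nat.mul_le_mul_left _ hkstep)
            (Nat.mul_le_mul_right _ hmod.le)
  have h2 : k * ((n + d) * τ + 1) ≤ k * (m * c) := Nat.mul_le_mul_left _ hlt
  have h3 : k * ((n + d) * τ + 1) = (n + d) * (k * τ) + k := by ring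
  have h4 : k * (m * c) = k * m * c := by ring
  omega

theorem cyclic_multiplicity_le_twice_linear (S : Finset ℤ) (hS : S.Nonempty) (d n : ℕ)
    (hd : S.max' hS - S.min' hS = (d : ℤ)) (hn : d < n) [NeZero n] :
    (covNumAdd (ZMod n) (S.image (fun x : ℤ => (x : ZMod n))) : ℝ) * S.card / n ≤
        ((n : ℝ) + d) / n * (covDens S * S.card) ∧
      ((n : ℝ) + d) / n * (covDens S * S.card) < 2 * (covDens S * S.card) := by
  have hn0 : 0 < n := Nat.pos_of_ne_zero (NeZero.ne n)
  have hnR : 0 < (n : ℝ) := by exact_mod_cast hn0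
  have hSR : 0 < (S.card : ℝ) := by exact_mod_cast Finset.card_pos.mpr hS
  have hndR : 0 < (n : ℝ) + d := by positivity
  set c := covNumAdd (ZMod n) (S.image (fun x : ℤ => (x : ZMod n))) with hc
  have hτS : ∀ m : ℕ+, ((m : ℕ) : ℝ) ≤ (tauZ S m : ℝ) * S.card := by
    intro m
    obtain ⟨T, hTcard, hTcov⟩ := tau_spec S hS m
    have h1 : (Finset.Icc (1 : ℤ) ((m : ℕ) : ℤ)).card = (m : ℕ) := by
      rw [Int.card_Icc]; simp
    have h2 := Finset.card_le_card hTcov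
    have h3 := Finset.card_add_le (s := T) (t := S)
    have h4 : (m : ℕ) ≤ tauZ S m * S.card := by
      calc (m : ℕ) = (Finset.Icc (1 : ℤ) ((m : ℕ) : ℤ)).card := h1.symm
        _ ≤ (T + S).card := h2
        _ ≤ T.card * S.card := h3
        _ = tauZ S m * S.card := by rw [hTcard]
    exact_mod_cast h4
  have hpos : 0 < covDens S := by
    have hle : (1 : ℝ) / S.card ≤ covDens S := by
      refine le_ciInf fun m => ?_
      have hm : (0 : ℝ) < ((m : ℕ) : ℝ) := by exact_mod_cast m.pos
      rw [div_le_div_iff₀ hSR hm]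
      have := hτS m
      linarith
    have : (0 : ℝ) < 1 / S.card := by positivity
    linarith
  have hcle : (c : ℝ) ≤ ((n : ℝ) + d) * covDens S := by
    rw [mul_comm, ← div_le_iff₀ hndR]
    refine le_ciInf fun m => ?_
    have hm : (0 : ℝ) < ((m : ℕ) : ℝ) := by exact_mod_cast m.pos
    rw [div_le_div_iff₀ hndR hm]
    have hkey := key_nat S hS d n hd m
    have : ((m : ℕ) : ℝ) * c ≤ ((n : ℝ) + d) * (tauZ S m : ℝ) := by exact_mod_cast hkey
    linarith
  constructor
  · have e : ((n : ℝ) + d) / n * (covDens S * S.card) =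
        (((n : ℝ) + d) * covDens S) * S.card / n := by ring
    rw [e]
    gcongr
  · have h2 : ((n : ℝ) + d) / n < 2 := by
      rw [div_lt_iff₀ hnR]
      have : (d : ℝ) < n := by exact_mod_cast hn
      linarith
    have hκ : 0 < covDens S * S.card := by positivity
    exact mul_lt_mul_of_pos_right h2 hκ
end

section
/- Let S = {s_1,...,s_k} ⊂ ℤ and let S̃ = ∪_{j=1}^k [s_j, s_j + 1) ⊂ ℝ. If T ⊂ ℝ is finite with T + S̃ ⊇ [0,n] for an integer n ≥ 1, then the set T̂ = {⌈t⌉ : t ∈ T} ⊂ ℤ satisfies T̂ + S ⊇ {1,...,n}. Hence the minimal number of translates of S covering {1,...,n} in ℤ is at most the minimal number of translates of S̃ covering [0,n] in ℝ. -/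
open Pointwise

/-- `S̃ = ∪_{s ∈ S} [s, s+1) ⊂ ℝ`, the union of half-open unit intervals with
left endpoints in `S`. -/
def unitThickening (S : Finset ℤ) : Set ℝ :=
  ⋃ s ∈ S, Set.Ico (s : ℝ) ((s : ℝ) + 1)

lemma main_part1 (S : Finset ℤ) (n : ℕ) (T : Finset ℝ)
    (hcov : Set.Icc (0 : ℝ) (n : ℝ) ⊆ ⋃ t ∈ T, (fun y => t + y) '' unitThickening S) :
    Finset.Icc (1 : ℤ) (n : ℤ) ⊆ T.image (fun t => ⌈t⌉) + S := by
  intro x hx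
  rw [Finset.mem_Icc] at hx
  have hx' : (x : ℝ) ∈ Set.Icc (0 : ℝ) (n : ℝ) := by
    constructor
    · exact_mod_cast le_trans zero_le_one hx.1
    · exact_mod_cast hx.2
  obtain ⟨U, ⟨t, rfl⟩, hU⟩ := hcov hx'
  simp only [Set.mem_iUnion, exists_prop] at hU
  obtain ⟨ht, y, hy, hxy⟩ := hU
  have hxy' : t + y = (x : ℝ) := hxy
  rw [unitThickening, Set.mem_iUnion₂] at hy
  obtain ⟨s, hs, hy⟩ := hy
  obtain ⟨hy1, hy2⟩ := hy
  have hceil : ⌈t⌉ = x - s := by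
    rw [Int.ceil_eq_iff]
    constructor
    · push_cast
      linarith
    · push_cast
      linarith
  rw [Finset.mem_add]
  exact ⟨x - s, Finset.mem_image.2 ⟨t, ht, hceil⟩, s, hs, by ring⟩

theorem real_cover_gives_integer_cover (S : Finset ℤ) (n : ℕ) (hn : 1 ≤ n) :
    (∀ T : Finset ℝ,
        Set.Icc (0 : ℝ) (n : ℝ) ⊆ ⋃ t ∈ T, (fun y => t + y) '' unitThickening S →
        Finset.Icc (1 : ℤ) (n : ℤ) ⊆ T.image (fun t => ⌈t⌉) + S) ∧
    tauZ S n ≤ sInf {m | ∃ T : Finset ℝ, T.card = m ∧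
      Set.Icc (0 : ℝ) (n : ℝ) ⊆ ⋃ t ∈ T, (fun y => t + y) '' unitThickening S} := by
  refine ⟨fun T h => main_part1 S n T h, ?_⟩
  set R : Set ℕ := {m | ∃ T : Finset ℝ, T.card = m ∧
      Set.Icc (0 : ℝ) (n : ℝ) ⊆ ⋃ t ∈ T, (fun y => t + y) '' unitThickening S} with hR
  by_cases hne : R.Nonempty
  · obtain ⟨T, hcard, hcov⟩ := Nat.sInf_mem hne
    have h1 := main_part1 S n T hcov
    have h2 : tauZ S n ≤ (T.image (fun t => ⌈t⌉)).card :=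
      Nat.sInf_le ⟨T.image (fun t => ⌈t⌉), rfl, h1⟩
    calc tauZ S n ≤ (T.image (fun t => ⌈t⌉)).card := h2
      _ ≤ T.card := Finset.card_image_le
      _ = sInf R := hcard
  · -- R empty: show the integer cover set is also empty, so tauZ = 0
    rw [Set.not_nonempty_iff_eq_empty] at hne
    rw [hne, Nat.sInf_empty]
    have hZempty : {m | ∃ T : Finset ℤ, T.card = m ∧ Finset.Icc (1 : ℤ) n ⊆ T + S} = ∅ := by
      rw [Set.eq_empty_iff_forall_notMem]
      rintro m ⟨T, hcard, hcov⟩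
      -- build a real cover
      set T'' : Finset ℝ :=
        (T.image (fun t : ℤ => (t : ℝ))) ∪ (T.image (fun t : ℤ => (t : ℝ) - 1)) with hT''
      have : T''.card ∈ R := by
        refine ⟨T'', rfl, ?_⟩
        intro x hx
        obtain ⟨hx0, hxn⟩ := hx
        rcases eq_or_lt_of_le hxn with hxeq | hxlt
        · -- x = n
          have hmem : (n : ℤ) ∈ Finset.Icc (1 : ℤ) (n : ℤ) := by
            rw [Finset.mem_Icc]; exact ⟨by exact_mod_cast hn, le_refl _⟩
          obtain ⟨a, ha, b, hb, hab⟩ := Finset.mem_add.1 (hcov hmem)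
          refine Set.mem_iUnion₂.2 ⟨(a : ℝ), ?_, ?_⟩
          · exact Finset.mem_union_left _ (Finset.mem_image.2 ⟨a, ha, rfl⟩)
          · refine ⟨(b : ℝ), Set.mem_iUnion₂.2 ⟨b, hb, ?_⟩, ?_⟩
            · exact ⟨le_refl _, by linarith⟩
            · rw [hxeq]; show (a : ℝ) + b = n; exact_mod_cast hab
        · -- x < n
          set k : ℤ := ⌊x⌋ with hk
          have hk0 : 0 ≤ k := Int.floor_nonneg.2 hx0
          have hkx : (k : ℝ) ≤ x := Int.floor_le x
          have hxk : x < (k : ℝ) + 1 := Int.lt_floor_add_one x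
          have hkn : k + 1 ≤ (n : ℤ) := by
            have : k < (n : ℤ) := by exact_mod_cast Int.floor_lt.2 (by exact_mod_cast hxlt)
            omega
          have hmem : k + 1 ∈ Finset.Icc (1 : ℤ) (n : ℤ) := by
            rw [Finset.mem_Icc]; exact ⟨by omega, hkn⟩
          obtain ⟨a, ha, b, hb, hab⟩ := Finset.mem_add.1 (hcov hmem)
          refine Set.mem_iUnion₂.2 ⟨(a : ℝ) - 1, ?_, ?_⟩
          · exact Finset.mem_union_right _ (Finset.mem_image.2 ⟨a, ha, rfl⟩)
          · refine ⟨x - (a : ℝ) + 1, Set.mem_iUnion₂.2 ⟨b, hb, ?_, ?_⟩, by ring⟩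
            · have : (a : ℝ) + b = (k : ℝ) + 1 := by exact_mod_cast hab
              linarith
            · have : (a : ℝ) + b = (k : ℝ) + 1 := by exact_mod_cast hab
              linarith
      rw [hne] at this
      exact this
    rw [tauZ, hZempty, Nat.sInf_empty]
end

section
/- If S = I_1 ∪ I_2 is a union of two disjoint closed intervals in ℝ with lengths a ≥ b > 0 and gap c satisfying c ≤ b, then ℝ can be covered periodically by translates {S + ib + j(a+2b+c) : i ∈ {0,1}, j ∈ ℤ}, giving covering efficiency at least (a+2b+c)/(2(a+b)); in particular the covering density of S is at most 2/(a+2b+c). -/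
open Pointwise

/-- `τ(S,x)`: the minimal number of real translates of `S` covering `[0,x]`. -/
noncomputable def tauR (S : Set ℝ) (x : ℝ) : ℕ :=
  sInf {m | ∃ T : Finset ℝ, T.card = m ∧
    Set.Icc (0 : ℝ) x ⊆ ⋃ t ∈ T, (fun y => t + y) '' S}

/-- The covering density of `S ⊂ ℝ`, as the infimum of `τ(S,x)/x` over `x > 0`. -/
noncomputable def densR (S : Set ℝ) : ℝ :=
  sInf {r : ℝ | ∃ x : ℝ, 0 < x ∧ r = (tauR S x : ℝ) / x}

/-- One period `[0, a+2b+c]` is covered by `S ∪ (S + b)`. -/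
lemma cover_period (a b c : ℝ) (hab : b ≤ a) (hb : 0 < b) (hc : 0 < c) (hcb : c ≤ b)
    {z : ℝ} (hz : z ∈ Set.Icc 0 (a + 2 * b + c)) :
    ∃ i : Fin 2, ∃ y ∈ Set.Icc 0 a ∪ Set.Icc (a + c) (a + c + b), y + (i : ℝ) * b = z := by
  obtain ⟨h0, h1⟩ := hz
  rcases le_or_gt z a with h | h
  · exact ⟨0, z, Or.inl ⟨h0, h⟩, by simp⟩
  rcases le_or_gt z (a + c) with h2 | h2
  · exact ⟨1, z - b, Or.inl ⟨by linarith, by linarith⟩, by push_cast [Fin.val_one]; ring⟩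
  rcases le_or_gt z (a + c + b) with h3 | h3
  · exact ⟨0, z, Or.inr ⟨h2.le, h3⟩, by simp⟩
  · exact ⟨1, z - b, Or.inr ⟨by linarith, by linarith⟩, by push_cast [Fin.val_one]; ring⟩

/-- The set defining `tauR` is nonempty: `[0,x]` admits some finite cover by translates. -/
lemma tau_set_nonempty (a b c : ℝ) (ha : 0 < a) (hc : 0 < c) (hb : 0 < b) (x : ℝ) :
    {m | ∃ T : Finset ℝ, T.card = m ∧
      Set.Icc (0 : ℝ) x ⊆ ⋃ t ∈ T, (fun y => t + y) ''
        (Set.Icc 0 a ∪ Set.Icc (a + c) (a + c + b))}.Nonempty := by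
  classical
  set n : ℕ := ⌈x / a⌉₊ with hn
  set T : Finset ℝ := (Finset.range (n + 1)).image (fun j : ℕ => (j : ℝ) * a) with hT
  refine ⟨T.card, T, rfl, ?_⟩
  intro y hy
  obtain ⟨hy0, hyx⟩ := hy
  set j : ℕ := ⌊y / a⌋₊ with hj
  have hja : (j : ℝ) * a ≤ y := by
    have := Nat.floor_le (div_nonneg hy0 ha.le)
    calc (j : ℝ) * a ≤ (y / a) * a := by
          apply mul_le_mul_of_nonneg_right this ha.le
      _ = y := div_mul_cancel₀ _ ha.ne'
  have hya : y < ((j : ℝ) + 1) * a := by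
    have := Nat.lt_floor_add_one (y / a)
    calc y = (y / a) * a := (div_mul_cancel₀ _ ha.ne').symm
      _ < ((j : ℝ) + 1) * a := by
          apply mul_lt_mul_of_pos_right (by exact_mod_cast this) ha
  have hjn : j ≤ n := by
    have h1 : j ≤ ⌊x / a⌋₊ := Nat.floor_le_floor (by gcongr)
    exact h1.trans (Nat.floor_le_ceil _)
  have htmem : ((j : ℝ) * a) ∈ T := by
    simp only [hT, Finset.mem_image, Finset.mem_range]
    exact ⟨j, Nat.lt_succ_of_le hjn, rfl⟩
  exact Set.mem_biUnion htmem ⟨y - (j : ℝ) * a, Or.inl ⟨by linarith, by nlinarith⟩, by ring⟩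

/-- Volume bound for a translate of `S`. -/
lemma volume_translate_le (a b c t : ℝ) (ha : 0 ≤ a) (hb : 0 ≤ b) (hc : 0 ≤ c) :
    MeasureTheory.volume ((fun y => t + y) ''
      (Set.Icc 0 a ∪ Set.Icc (a + c) (a + c + b))) ≤ ENNReal.ofReal (a + b) := by
  rw [Set.image_union, Set.image_const_add_Icc, Set.image_const_add_Icc]
  calc MeasureTheory.volume (Set.Icc (t + 0) (t + a) ∪ Set.Icc (t + (a + c)) (t + (a + c + b)))
      ≤ MeasureTheory.volume (Set.Icc (t + 0) (t + a)) +
        MeasureTheory.volume (Set.Icc (t + (a + c)) (t + (a + c + b))) :=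
        MeasureTheory.measure_union_le _ _
    _ = ENNReal.ofReal a + ENNReal.ofReal b := by
        rw [Real.volume_Icc, Real.volume_Icc]
        congr 1 <;> ring_nf
    _ = ENNReal.ofReal (a + b) := (ENNReal.ofReal_add ha hb).symm

/-- Measure lower bound: any `m`-translate cover of `[0,x]` has `x ≤ m (a+b)`. -/
lemma le_card_mul (a b c x : ℝ) (ha : 0 ≤ a) (hb : 0 ≤ b) (hc : 0 ≤ c) (hx : 0 ≤ x)
    (T : Finset ℝ)
    (hcov : Set.Icc (0 : ℝ) x ⊆ ⋃ t ∈ T, (fun y => t + y) ''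
      (Set.Icc 0 a ∪ Set.Icc (a + c) (a + c + b))) :
    x ≤ (T.card : ℝ) * (a + b) := by
  have h1 : MeasureTheory.volume (Set.Icc (0 : ℝ) x) ≤
      ∑ t ∈ T, MeasureTheory.volume ((fun y => t + y) ''
        (Set.Icc 0 a ∪ Set.Icc (a + c) (a + c + b))) :=
    le_trans (MeasureTheory.measure_mono hcov) (MeasureTheory.measure_biUnion_finset_le T _)
  have h2 : ∑ t ∈ T, MeasureTheory.volume ((fun y => t + y) ''
        (Set.Icc 0 a ∪ Set.Icc (a + c) (a + c + b))) ≤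
      T.card • ENNReal.ofReal (a + b) :=
    Finset.sum_le_card_nsmul T _ _ (fun t _ => volume_translate_le a b c t ha hb hc)
  have h3 : ENNReal.ofReal x ≤ (T.card : ℕ) • ENNReal.ofReal (a + b) := by
    calc ENNReal.ofReal x = MeasureTheory.volume (Set.Icc (0 : ℝ) x) := by
          rw [Real.volume_Icc, sub_zero]
      _ ≤ _ := h1.trans h2
  rw [nsmul_eq_mul] at h3
  have h4 : ENNReal.ofReal x ≤ ENNReal.ofReal ((T.card : ℝ) * (a + b)) := by
    rw [ENNReal.ofReal_mul (by positivity)]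
    simpa [ENNReal.ofReal_natCast] using h3
  exact (ENNReal.ofReal_le_ofReal_iff (by positivity)).mp h4

theorem two_intervals_small_gap_cover (a b c : ℝ) (hab : b ≤ a) (hb : 0 < b)
    (hc : 0 < c) (hcb : c ≤ b) :
    (⋃ (i : Fin 2) (j : ℤ), (fun y => y + (i : ℝ) * b + (j : ℝ) * (a + 2 * b + c)) ''
        (Set.Icc 0 a ∪ Set.Icc (a + c) (a + c + b)) = Set.univ) ∧
    densR (Set.Icc 0 a ∪ Set.Icc (a + c) (a + c + b)) ≤ 2 / (a + 2 * b + c) ∧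
    (a + 2 * b + c) / (2 * (a + b)) ≤
      1 / (densR (Set.Icc 0 a ∪ Set.Icc (a + c) (a + c + b)) * (a + b)) := by
  have ha : 0 < a := lt_of_lt_of_le hb hab
  set S : Set ℝ := Set.Icc 0 a ∪ Set.Icc (a + c) (a + c + b) with hS
  set p : ℝ := a + 2 * b + c with hp
  have hp0 : 0 < p := by positivity
  -- Part 1: the translates cover ℝ
  have part1 : (⋃ (i : Fin 2) (j : ℤ), (fun y => y + (i : ℝ) * b + (j : ℝ) * p) '' S)
      = Set.univ := by
    ext x
    simp only [Set.mem_iUnion, Set.mem_image, Set.mem_univ, iff_true]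
    set j : ℤ := ⌊x / p⌋ with hj
    have hj1 : (j : ℝ) * p ≤ x := by
      have := Int.floor_le (x / p)
      calc (j : ℝ) * p ≤ (x / p) * p := mul_le_mul_of_nonneg_right this hp0.le
        _ = x := div_mul_cancel₀ _ hp0.ne'
    have hj2 : x ≤ ((j : ℝ) + 1) * p := by
      have := (Int.lt_floor_add_one (x / p)).le
      calc x = (x / p) * p := (div_mul_cancel₀ _ hp0.ne').symm
        _ ≤ ((j : ℝ) + 1) * p := by
            apply mul_le_mul_of_nonneg_right (by exact_mod_cast this) hp0.le
    obtain ⟨i, y, hy, hyz⟩ := cover_period a b c hab hb hc hcb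
      (z := x - (j : ℝ) * p) ⟨by linarith, by nlinarith⟩
    exact ⟨i, j, y, hy, by linarith⟩
  -- tauR S p ≤ 2
  have htau2 : tauR S p ≤ 2 := by
    apply Nat.sInf_le
    refine ⟨{0, b}, ?_, ?_⟩
    · rw [Finset.card_insert_of_notMem (by simp [hb.ne]), Finset.card_singleton]
    · intro z hz
      obtain ⟨i, y, hy, hyz⟩ := cover_period a b c hab hb hc hcb hz
      have ht : ((i : ℝ) * b) ∈ ({0, b} : Finset ℝ) := by fin_cases i <;> simp
      exact Set.mem_biUnion ht ⟨y, hy, by dsimp only; linarith⟩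
  -- densR lower bound: 1/(a+b) ≤ densR S
  have hlow : 1 / (a + b) ≤ densR S := by
    unfold densR
    refine le_csInf ⟨(tauR S 1 : ℝ) / 1, ⟨1, one_pos, rfl⟩⟩ ?_
    rintro r ⟨x, hx, rfl⟩
    obtain ⟨T, hTcard, hTcov⟩ := Nat.sInf_mem (tau_set_nonempty a b c ha hc hb x)
    have h5 : x ≤ (tauR S x : ℝ) * (a + b) := by
      have h := le_card_mul a b c x ha.le hb.le hc.le hx.le T hTcov
      rw [hTcard] at h
      exact h
    rw [div_le_div_iff₀ (by positivity) hx]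
    linarith
  have hd0 : 0 < densR S := lt_of_lt_of_le (by positivity) hlow
  -- densR upper bound
  have hupper : densR S ≤ 2 / p := by
    have hbdd : BddBelow {r : ℝ | ∃ x : ℝ, 0 < x ∧ r = (tauR S x : ℝ) / x} := by
      refine ⟨0, ?_⟩
      rintro r ⟨x, hx, rfl⟩
      positivity
    have h1 : densR S ≤ (tauR S p : ℝ) / p := csInf_le hbdd ⟨p, hp0, rfl⟩
    have h2 : (tauR S p : ℝ) / p ≤ 2 / p := by
      gcongr
      exact_mod_cast htau2
    exact h1.trans h2
  refine ⟨part1, hupper, ?_⟩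
  -- final arithmetic
  rw [div_le_div_iff₀ (by positivity) (mul_pos hd0 (by positivity))]
  have h3 : densR S * p ≤ 2 := by
    have := mul_le_mul_of_nonneg_right hupper hp0.le
    rwa [div_mul_cancel₀ _ hp0.ne'] at this
  nlinarith [mul_le_mul_of_nonneg_right h3 (by positivity : (0:ℝ) ≤ a + b)]
end
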